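/- arXiv:1902.04779 — 4 statements merged into one kernel-verified Lean document; each statement's English description precedes it below -/
import Mathlib

section
/- Suppose a discounted MDP admits a K-dimensional linear feature representation, i.e., P(s'|s,a) = Σ_{k=1}^K φ_k(s,a) ψ_k(s') for all (s,a,s'). Then for every policy π, the Q-function Q^π lies in the linear span of the reward function r and the feature functions φ_1, …, φ_K, viewed as functions on S × A. Concretely, there exists w ∈ ℝ^K such that Q^π(s,a) = r(s,a) + γ · Σ_k φ_k(s,a) w_k for all (s,a). -/
theorem Q_function_in_span_of_features
    {S A : Type} [Fintype S] {K : ℕ}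
    (r : S → A → ℝ) (P : S → A → S → ℝ) (γ : ℝ)
    (hγ0 : 0 < γ) (hγ1 : γ < 1)
    (hP0 : ∀ s a s', 0 ≤ P s a s') (hP1 : ∀ s a, ∑ s', P s a s' = 1)
    (φ : S → A → Fin K → ℝ) (ψ : Fin K → S → ℝ)
    (hlin : ∀ s a s', P s a s' = ∑ k, φ s a k * ψ k s')
    (π : S → A) (vπ : S → ℝ)
    (hfix : ∀ s, vπ s = r s (π s) + γ * ∑ s', P s (π s) s' * vπ s') :
    ∃ w : Fin K → ℝ, ∀ s a,
      r s a + γ * ∑ s', P s a s' * vπ s'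
        = r s a + γ * ∑ k, φ s a k * w k := by
  refine ⟨fun k => ∑ s', ψ k s' * vπ s', fun s a => ?_⟩
  congr 1
  congr 1
  simp only [hlin, Finset.sum_mul, Finset.mul_sum]
  rw [Finset.sum_comm]
  congr 1; ext k; congr 1; ext s'; ring
end

section
/- Let M be a discounted MDP with Bellman operator T acting on Q-functions, let φ : S × A → ℝ^K be a feature map, and let F = Span(r, φ_1, …, φ_K) ⊆ ℝ^{S×A}. If M admits the linear feature representation P(s'|s,a) = Σ_k φ_k(s,a) ψ_k(s'), then T maps F into F, i.e., the Bellman error d(T F, F) = sup_{g ∈ F} inf_{f ∈ F} ‖f − T g‖ equals zero. -/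
theorem bellman_operator_preserves_linear_span
    {S A : Type} [Fintype S] [Fintype A] [Nonempty A] {K : ℕ}
    (r : S → A → ℝ) (P : S → A → S → ℝ) (γ : ℝ)
    (hγ0 : 0 < γ) (hγ1 : γ < 1)
    (hP0 : ∀ s a s', 0 ≤ P s a s') (hP1 : ∀ s a, ∑ s', P s a s' = 1)
    (φ : S → A → Fin K → ℝ) (ψ : Fin K → S → ℝ)
    (hlin : ∀ s a s', P s a s' = ∑ k, φ s a k * ψ k s')
    (F : Submodule ℝ (S × A → ℝ))
    (hF : F = Submodule.span ℝ
      ({fun p : S × A => r p.1 p.2} ∪ Set.range (fun k (p : S × A) => φ p.1 p.2 k))) :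
    ∀ g : S × A → ℝ, g ∈ F →
      (fun p : S × A => r p.1 p.2 + γ * ∑ s',
          P p.1 p.2 s' * (Finset.univ.sup' Finset.univ_nonempty fun a' => g (s', a')))
        ∈ F := by
  intro g _
  set m : S → ℝ := fun s' => Finset.univ.sup' Finset.univ_nonempty fun a' => g (s', a')
  have hrmem : (fun p : S × A => r p.1 p.2) ∈ F := by
    rw [hF]; exact Submodule.subset_span (Set.mem_union_left _ rfl)
  have hφmem : ∀ k, (fun p : S × A => φ p.1 p.2 k) ∈ F := fun k => by
    rw [hF]; exact Submodule.subset_span (Set.mem_union_right _ ⟨k, rfl⟩)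
  have key : (fun p : S × A => r p.1 p.2 + γ * ∑ s', P p.1 p.2 s' * m s')
      = (fun p : S × A => r p.1 p.2)
        + ∑ k, (γ * ∑ s', ψ k s' * m s') • (fun p : S × A => φ p.1 p.2 k) := by
    funext p
    simp only [Pi.add_apply, Finset.sum_apply, Pi.smul_apply, smul_eq_mul]
    congr 1
    rw [show (∑ s', P p.1 p.2 s' * m s')
        = ∑ k, φ p.1 p.2 k * ∑ s', ψ k s' * m s' from by
      calc ∑ s', P p.1 p.2 s' * m s'
          = ∑ s', ∑ k, φ p.1 p.2 k * ψ k s' * m s' := by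
            simp [hlin, Finset.sum_mul]
        _ = ∑ k, ∑ s', φ p.1 p.2 k * ψ k s' * m s' := Finset.sum_comm
        _ = ∑ k, φ p.1 p.2 k * ∑ s', ψ k s' * m s' := by
            simp [Finset.mul_sum, mul_assoc]]
    rw [Finset.mul_sum]
    congr 1; funext k; ring
  rw [key]
  exact F.add_mem hrmem (F.sum_mem fun k _ => F.smul_mem _ (hφmem k))
end

section
/- Law of total variance bound for Markov chains: let π be a policy with value function v^π satisfying v^π(s) ∈ [0, 1/(1−γ)], let P^π be its transition matrix, and define σ^π(s) = Var_{s' ∼ P(·|s,π(s))}[v^π(s')]. Then Σ_{t=0}^{∞} γ^{2t} (P^π)^t σ^π ≤ (1/(1−γ))^2 · 𝟙 entrywise, where 𝟙 is the all-ones vector. -/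
/-!
Put `μ = P v` and `g = μ (M - μ)` with `M = 1 / (1 - γ)`, so `0 ≤ g ≤ M²`. Since `v = r + γ μ`
with `r ∈ [0, 1]` and `μ ∈ [0, M]`, pointwise `v² + γ² g ≤ M v`; averaging with `P` and using
`P (M v) = M μ` gives `σ ≤ g - γ² P g`. The series `∑ γ^{2t} P^t σ` of nonnegative terms
therefore telescopes to at most `g ≤ M²`.
-/

open Finset Matrix

lemma sq_add_sq_mul_mul_sub_le {γ M r u : ℝ} (hγ : 0 ≤ γ) (hM : (1 - γ) * M = 1)
    (hr : r ∈ Set.Icc 0 1) (hu : u ∈ Set.Icc 0 M) :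
    (r + γ * u) ^ 2 + γ ^ 2 * (u * (M - u)) ≤ M * (r + γ * u) := by
  -- the gap is `r (M - r) + γ u (1 - 2 r)`, affine in `u` and nonnegative at `u = 0` and `u = M`
  obtain ⟨hr0, hr1⟩ := hr
  obtain ⟨hu0, huM⟩ := hu
  nlinarith [mul_nonneg hr0 (sub_nonneg.2 hr1), mul_nonneg hu0 (sub_nonneg.2 huM),
    mul_nonneg (mul_nonneg hγ hr0) (sub_nonneg.2 huM), mul_nonneg hγ hu0]

namespace Matrix

variable {n : Type*} [Fintype n]

lemma mulVec_mono_of_nonneg {Q : Matrix n n ℝ} (hQ : ∀ i j, 0 ≤ Q i j) {x y : n → ℝ}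
    (hxy : x ≤ y) : Q *ᵥ x ≤ Q *ᵥ y :=
  fun i => sum_le_sum fun j _ => mul_le_mul_of_nonneg_left (hxy j) (hQ i j)

lemma mulVec_nonneg_of_nonneg {Q : Matrix n n ℝ} (hQ : ∀ i j, 0 ≤ Q i j) {x : n → ℝ}
    (hx : 0 ≤ x) : 0 ≤ Q *ᵥ x := by
  simpa using mulVec_mono_of_nonneg hQ hx

variable [DecidableEq n]

lemma sum_range_pow_smul_mulVec_le {Q : Matrix n n ℝ} (hQ : ∀ i j, 0 ≤ Q i j) {c : ℝ}
    (hc : 0 ≤ c) {σ g : n → ℝ} (h : σ ≤ g - c • Q *ᵥ g) (N : ℕ) :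
    ∑ t ∈ range N, c ^ t • Q ^ t *ᵥ σ ≤ g - c ^ N • Q ^ N *ᵥ g := by
  induction N with
  | zero => simp
  | succ N ih =>
    have hstep : c ^ N • Q ^ N *ᵥ σ ≤ c ^ N • Q ^ N *ᵥ (g - c • Q *ᵥ g) :=
      smul_le_smul_of_nonneg_left (mulVec_mono_of_nonneg (pow_apply_nonneg hQ N) h)
        (pow_nonneg hc N)
    calc ∑ t ∈ range (N + 1), c ^ t • Q ^ t *ᵥ σ
        = ∑ t ∈ range N, c ^ t • Q ^ t *ᵥ σ + c ^ N • Q ^ N *ᵥ σ := sum_range_succ _ _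
      _ ≤ (g - c ^ N • Q ^ N *ᵥ g) + c ^ N • Q ^ N *ᵥ (g - c • Q *ᵥ g) := add_le_add ih hstep
      _ = g - c ^ (N + 1) • Q ^ (N + 1) *ᵥ g := by
        rw [mulVec_sub, mulVec_smul, mulVec_mulVec, ← pow_succ, smul_sub, smul_smul, ← pow_succ]
        abel

lemma tsum_pow_mul_mulVec_le {Q : Matrix n n ℝ} (hQ : ∀ i j, 0 ≤ Q i j) {c : ℝ} (hc : 0 ≤ c)
    {σ g : n → ℝ} (hσ : 0 ≤ σ) (hg : 0 ≤ g) (h : σ ≤ g - c • Q *ᵥ g) (i : n) :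
    ∑' t : ℕ, c ^ t * (Q ^ t *ᵥ σ) i ≤ g i := by
  refine Real.tsum_le_of_sum_range_le
    (fun t => mul_nonneg (pow_nonneg hc t) (mulVec_nonneg_of_nonneg (pow_apply_nonneg hQ t) hσ i))
    fun N => ?_
  have hsum := sum_range_pow_smul_mulVec_le hQ hc h N i
  have htail := mul_nonneg (pow_nonneg hc N) (mulVec_nonneg_of_nonneg (pow_apply_nonneg hQ N) hg i)
  simp only [Finset.sum_apply, Pi.sub_apply, Pi.smul_apply, smul_eq_mul] at hsum
  linarith

variable {P : Matrix n n ℝ}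

lemma mulVec_mem_Icc_of_mem_rowStochastic (hP : P ∈ rowStochastic ℝ n) {x : n → ℝ} {a b : ℝ}
    (hx : ∀ j, x j ∈ Set.Icc a b) (i : n) : (P *ᵥ x) i ∈ Set.Icc a b := by
  have hconst : ∀ c : ℝ, (P *ᵥ fun _ => c) i = c := fun c => by
    simp [mulVec, dotProduct, ← sum_mul, sum_row_of_mem_rowStochastic hP i]
  have hP0 := (mem_rowStochastic.1 hP).1
  refine ⟨hconst a ▸ mulVec_mono_of_nonneg hP0 (x := fun _ => a) (fun j => (hx j).1) i,
    hconst b ▸ mulVec_mono_of_nonneg hP0 (y := fun _ => b) (fun j => (hx j).2) i⟩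

lemma sq_mulVec_le_mulVec_sq (hP : P ∈ rowStochastic ℝ n) (x : n → ℝ) (i : n) :
    (P *ᵥ x) i ^ 2 ≤ (P *ᵥ x ^ 2) i := by
  simpa [mulVec, dotProduct] using (Even.convexOn_pow even_two).map_sum_le (p := x)
    (fun _ _ => nonneg_of_mem_rowStochastic hP) (sum_row_of_mem_rowStochastic hP i)
    fun _ _ => Set.mem_univ _

lemma mulVec_sq_sub_sq_le (hP : P ∈ rowStochastic ℝ n) {γ M : ℝ} (hγ : 0 ≤ γ)
    (hM : (1 - γ) * M = 1)
    {r v μ : n → ℝ} (hr : ∀ j, r j ∈ Set.Icc 0 1) (hμ : ∀ j, μ j ∈ Set.Icc 0 M)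
    (hμv : μ = P *ᵥ v) (hfix : v = r + γ • μ) :
    P *ᵥ v ^ 2 - μ ^ 2 ≤ (fun j => μ j * (M - μ j)) - γ ^ 2 • P *ᵥ fun j => μ j * (M - μ j) := by
  intro i
  have hpt : v ^ 2 + γ ^ 2 • (fun j => μ j * (M - μ j)) ≤ M • v := fun j => by
    simpa [hfix] using sq_add_sq_mul_mul_sub_le hγ hM (hr j) (hμ j)
  have hle := mulVec_mono_of_nonneg (mem_rowStochastic.1 hP).1 hpt i
  simp only [mulVec_add, mulVec_smul, Pi.add_apply, Pi.smul_apply, smul_eq_mul, ← hμv] at hle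
  simp only [Pi.sub_apply, Pi.pow_apply, Pi.smul_apply, smul_eq_mul]
  linarith

end Matrix

theorem law_of_total_variance_bound
    {S A : Type} [Fintype S] [DecidableEq S]
    (r : S → A → ℝ) (P : S → A → S → ℝ) (γ : ℝ)
    (hγ0 : 0 < γ) (hγ1 : γ < 1)
    (hr : ∀ s a, r s a ∈ Set.Icc (0:ℝ) 1)
    (hP0 : ∀ s a s', 0 ≤ P s a s') (hP1 : ∀ s a, ∑ s', P s a s' = 1)
    (π : S → A)
    (Pπ : Matrix S S ℝ) (hPπ : ∀ s s', Pπ s s' = P s (π s) s')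
    (vπ : S → ℝ)
    (hfix : ∀ s, vπ s = r s (π s) + γ * ∑ s', P s (π s) s' * vπ s')
    (hv : ∀ s, vπ s ∈ Set.Icc (0:ℝ) (1 / (1 - γ)))
    (σπ : S → ℝ)
    (hσ : ∀ s, σπ s = ∑ s', P s (π s) s' * (vπ s')^2
      - (∑ s', P s (π s) s' * vπ s')^2) :
    ∀ s, ∑' t : ℕ, γ ^ (2 * t) * ((Pπ ^ t).mulVec σπ s)
      ≤ (1 / (1 - γ))^2 := by
  intro s
  set M := 1 / (1 - γ)
  have hM : (1 - γ) * M = 1 := mul_one_div_cancel (by linarith)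
  have hstoch : Pπ ∈ rowStochastic ℝ S := mem_rowStochastic_iff_sum.2
    ⟨fun s s' => hPπ s s' ▸ hP0 _ _ _, fun s => by simpa only [hPπ] using hP1 s (π s)⟩
  have hmulVec : ∀ w s, (Pπ *ᵥ w) s = ∑ s', P s (π s) s' * w s' := fun w s => by
    simp [mulVec, dotProduct, hPπ]
  set μ := Pπ *ᵥ vπ with hμv
  have hμ : ∀ s, μ s ∈ Set.Icc 0 M := mulVec_mem_Icc_of_mem_rowStochastic hstoch hv
  have hvμ : vπ = (fun s => r s (π s)) + γ • μ := funext fun s => by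
    simp [hfix s, hμv, hmulVec]
  have hσμ : σπ = Pπ *ᵥ vπ ^ 2 - μ ^ 2 := funext fun s => by
    simp [hσ s, hμv, hmulVec]
  have hσ0 : 0 ≤ σπ := hσμ ▸ fun s => sub_nonneg.2 (sq_mulVec_le_mulVec_sq hstoch vπ s)
  have hg0 : 0 ≤ fun s => μ s * (M - μ s) := fun s => mul_nonneg (hμ s).1 (sub_nonneg.2 (hμ s).2)
  calc ∑' t : ℕ, γ ^ (2 * t) * (Pπ ^ t *ᵥ σπ) s
      = ∑' t : ℕ, (γ ^ 2) ^ t * (Pπ ^ t *ᵥ σπ) s := by simp only [pow_mul]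
    _ ≤ μ s * (M - μ s) :=
      tsum_pow_mul_mulVec_le (mem_rowStochastic.1 hstoch).1 (sq_nonneg γ) hσ0 hg0
        (hσμ ▸ mulVec_sq_sub_sq_le hstoch hγ0.le hM (fun s => hr s (π s)) hμ hμv hvμ) s
    _ ≤ M * M := mul_le_mul (hμ s).2 (sub_le_self _ (hμ s).1) (sub_nonneg.2 (hμ s).2)
      ((hμ s).1.trans (hμ s).2)
    _ = M ^ 2 := (sq M).symm
end

section
/- Let a discounted MDP satisfy P(·|s,a) = Σ_k φ_k(s,a) P(·|s_k,a_k) where φ(s,a) is a probability vector for each (s,a) (anchor representation). Define σ_k[V] = Var_{s' ∼ P(·|s_k,a_k)}[V(s')] and σ_{s,a}[V] = Var_{s' ∼ P(·|s,a)}[V(s')]. Then for every (s,a) and every V : S → ℝ: Σ_k φ_k(s,a) · sqrt(σ_k[V]) ≤ sqrt(σ_{s,a}[V]). -/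
/-- Jensen for the square: with probability weights, `(∑ w x)² ≤ ∑ w x²`. -/
lemma jensen_sq {ι : Type*} [Fintype ι] (w x : ι → ℝ)
    (hw0 : ∀ i, 0 ≤ w i) (hw1 : ∑ i, w i = 1) :
    (∑ i, w i * x i) ^ 2 ≤ ∑ i, w i * x i ^ 2 := by
  have h := Finset.sum_sq_le_sum_mul_sum_of_sq_eq_mul Finset.univ
    (r := fun i => w i * x i) (f := w) (g := fun i => w i * x i ^ 2)
    (fun i _ => hw0 i) (fun i _ => mul_nonneg (hw0 i) (sq_nonneg _))
    (fun i _ => by ring)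
  simpa [hw1] using h

/-- Jensen for sqrt: with probability weights and nonneg values,
`∑ w √v ≤ √(∑ w v)`. -/
lemma jensen_sqrt {ι : Type*} [Fintype ι] (w v : ι → ℝ)
    (hw0 : ∀ i, 0 ≤ w i) (hw1 : ∑ i, w i = 1) (hv0 : ∀ i, 0 ≤ v i) :
    ∑ i, w i * Real.sqrt (v i) ≤ Real.sqrt (∑ i, w i * v i) := by
  have h1 : (∑ i, w i * Real.sqrt (v i)) ^ 2 ≤ ∑ i, w i * Real.sqrt (v i) ^ 2 :=
    jensen_sq w (fun i => Real.sqrt (v i)) hw0 hw1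
  have h2 : ∑ i, w i * Real.sqrt (v i) ^ 2 ≤ ∑ i, w i * v i := by
    refine Finset.sum_le_sum fun i _ => ?_
    rw [Real.sq_sqrt (hv0 i)]
  have h0 : 0 ≤ ∑ i, w i * Real.sqrt (v i) :=
    Finset.sum_nonneg fun i _ => mul_nonneg (hw0 i) (Real.sqrt_nonneg _)
  have := Real.sqrt_le_sqrt (h1.trans h2)
  rwa [Real.sqrt_sq h0] at this

theorem anchor_stddev_convex_combination_bound
    {S A : Type} [Fintype S] {K : ℕ}
    (P : S → A → S → ℝ)
    (hP0 : ∀ s a s', 0 ≤ P s a s') (hP1 : ∀ s a, ∑ s', P s a s' = 1)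
    (sanch : Fin K → S) (aanch : Fin K → A)
    (φ : S → A → Fin K → ℝ)
    (hφ0 : ∀ s a k, 0 ≤ φ s a k) (hφ1 : ∀ s a, ∑ k, φ s a k = 1)
    (hmix : ∀ s a s', P s a s' = ∑ k, φ s a k * P (sanch k) (aanch k) s')
    (V : S → ℝ) :
    ∀ s a,
      ∑ k, φ s a k * Real.sqrt
          (∑ s', P (sanch k) (aanch k) s' * (V s')^2
            - (∑ s', P (sanch k) (aanch k) s' * V s')^2)
        ≤ Real.sqrt (∑ s', P s a s' * (V s')^2 - (∑ s', P s a s' * V s')^2) := by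
  intro s a
  set v : Fin K → ℝ := fun k =>
    ∑ s', P (sanch k) (aanch k) s' * (V s')^2
      - (∑ s', P (sanch k) (aanch k) s' * V s')^2 with hv
  have step1 : ∑ k, φ s a k * Real.sqrt (v k)
      ≤ Real.sqrt (∑ k, φ s a k * v k) := by
    refine jensen_sqrt _ _ (hφ0 s a) (hφ1 s a) fun k => ?_
    have := jensen_sq (P (sanch k) (aanch k)) V (hP0 _ _) (hP1 _ _)
    simp only [hv]
    have h : ∀ s', P (sanch k) (aanch k) s' * V s' ^ 2
        = P (sanch k) (aanch k) s' * V s' ^ 2 := fun _ => rfl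
    linarith [this]
  -- mixture identities
  have hmean : ∑ s', P s a s' * V s'
      = ∑ k, φ s a k * ∑ s', P (sanch k) (aanch k) s' * V s' := by
    simp_rw [hmix s a, Finset.sum_mul, Finset.mul_sum, mul_assoc]
    rw [Finset.sum_comm]
  have hsq : ∑ s', P s a s' * (V s')^2
      = ∑ k, φ s a k * ∑ s', P (sanch k) (aanch k) s' * (V s')^2 := by
    simp_rw [hmix s a, Finset.sum_mul, Finset.mul_sum, mul_assoc]
    rw [Finset.sum_comm]
  have step2 : ∑ k, φ s a k * v k
      ≤ ∑ s', P s a s' * (V s')^2 - (∑ s', P s a s' * V s')^2 := by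
    have hj : (∑ k, φ s a k * ∑ s', P (sanch k) (aanch k) s' * V s') ^ 2
        ≤ ∑ k, φ s a k * (∑ s', P (sanch k) (aanch k) s' * V s') ^ 2 :=
      jensen_sq _ _ (hφ0 s a) (hφ1 s a)
    have : ∑ k, φ s a k * v k
        = ∑ k, φ s a k * ∑ s', P (sanch k) (aanch k) s' * (V s')^2
          - ∑ k, φ s a k * (∑ s', P (sanch k) (aanch k) s' * V s') ^ 2 := by
      simp [hv, mul_sub, Finset.sum_sub_distrib]
    rw [this, hmean, hsq]
    linarith
  exact step1.trans (Real.sqrt_le_sqrt step2)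
end
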